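/- In the rewrite game over {a,b} with rules a^k → ε (k > 1 fixed) and b → ε, the Grundy value of a word u equals the parity of |u|_b + ⌊|u|_a / k⌋; in particular the languages of words of Grundy value 0 and of Grundy value 1 are both regular. -/

import Mathlib

inductive AB | a | b
deriving DecidableEq

/-- One move of the game `{a^k → ε, b → ε}`. -/
def Step (k : ℕ) (w w' : List AB) : Prop :=
  ∃ x y : List AB, w' = x ++ y ∧
    (w = x ++ List.replicate k AB.a ++ y ∨ w = x ++ [AB.b] ++ y)

/-- The minimum excluded value of a set of naturals. -/
noncomputable def mex (S : Set ℕ) : ℕ := sInf {n | n ∉ S}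

/-- `g` is the Grundy function of the game with moves `step`. -/
def IsGrundy (step : List AB → List AB → Prop) (g : List AB → ℕ) : Prop :=
  ∀ w, g w = mex (g '' {w' | step w w'})

/-- A language over `{a,b}` is regular if it is accepted by a DFA with finitely
many states. -/
def Regular (Lang : Set (List AB)) : Prop :=
  ∃ (σ : Type) (_ : Fintype σ) (M : DFA AB σ), M.accepts = Lang

/-!
Every move lowers `|u|_b + ⌊|u|_a / k⌋` by exactly one, and a move exists as long as this
quantity is positive (delete a `b`, or else `u = a^m` with `m ≥ k`). Hence all options of a
position have the same Grundy value, and induction with `mex {n % 2} = (n + 1) % 2` shows that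
the Grundy value is the parity of this quantity. That parity is a function of `|u|_b mod 2` and
`|u|_a mod 2k`, which a DFA with state space `ZMod 2k × ZMod 2` computes.
-/

def playLength (k : ℕ) (u : List AB) : ℕ := u.count AB.b + u.count AB.a / k

lemma mex_empty : mex ∅ = 0 :=
  Nat.sInf_eq_zero.mpr (Or.inl (Set.notMem_empty 0))

lemma mex_singleton_mod_two (n : ℕ) : mex {n % 2} = (n + 1) % 2 := by
  rcases Nat.mod_two_eq_zero_or_one n with h | h <;> rw [h, mex]
  · have hne : {m | m ∉ ({0} : Set ℕ)}.Nonempty := ⟨1, by simp⟩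
    have h0 : sInf {m | m ∉ ({0} : Set ℕ)} ≠ 0 := Nat.sInf_mem hne
    have h1 : sInf {m | m ∉ ({0} : Set ℕ)} ≤ 1 := Nat.sInf_le (by simp)
    omega
  · rw [Nat.sInf_eq_zero.mpr (Or.inl (by simp))]
    omega

theorem IsGrundy.eq_mod_two {step : List AB → List AB → Prop} {g f : List AB → ℕ}
    (hg : IsGrundy step g) (hstep : ∀ u v, step u v → f u = f v + 1)
    (hmove : ∀ u, 0 < f u → ∃ v, step u v) (u : List AB) : g u = f u % 2 := by
  induction hn : f u generalizing u with
  | zero =>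
    have hterminal : {v | step u v} = ∅ :=
      Set.eq_empty_of_forall_notMem fun v hv => by have := hstep u v hv; omega
    rw [hg u, hterminal, Set.image_empty, mex_empty]
  | succ n ih =>
    have himage : g '' {v | step u v} = {n % 2} := by
      refine Set.eq_singleton_iff_nonempty_unique_mem.mpr ⟨?_, ?_⟩
      · obtain ⟨v, hv⟩ := hmove u (by omega)
        exact ⟨g v, v, hv, rfl⟩
      · rintro _ ⟨v, hv, rfl⟩
        exact ih v (by have := hstep u v hv; omega)
    rw [hg u, himage, mex_singleton_mod_two]

lemma Step.playLength_eq_succ {k : ℕ} (hk : 0 < k) {u v : List AB} (h : Step k u v) :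
    playLength k u = playLength k v + 1 := by
  obtain ⟨x, y, rfl, rfl | rfl⟩ := h
  · have hdiv :
        (x.count AB.a + (k + y.count AB.a)) / k = (x.count AB.a + y.count AB.a) / k + 1 := by
      rw [Nat.add_left_comm, Nat.add_div_left _ hk]
    simp only [playLength, List.append_assoc, List.count_append, List.count_replicate_self,
      List.count_replicate, reduceCtorEq, beq_iff_eq, ↓reduceIte, zero_add, hdiv]
    omega
  · simp only [playLength, List.append_assoc, List.singleton_append, List.count_append,
      List.count_cons_self, List.count_cons_of_ne, ne_eq, reduceCtorEq, not_false_eq_true]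
    omega

lemma exists_step_of_playLength_pos {k : ℕ} {u : List AB} (h : 0 < playLength k u) :
    ∃ v, Step k u v := by
  by_cases hb : AB.b ∈ u
  · obtain ⟨x, y, rfl⟩ := List.append_of_mem hb
    exact ⟨x ++ y, x, y, rfl, Or.inr (by simp)⟩
  · have hall : ∀ c ∈ u, c = AB.a := fun c hc => by cases c <;> simp_all
    have hcount : u.count AB.a = u.length := List.count_eq_length.mpr fun c hc => (hall c hc).symm
    have hk : k ≤ u.length := by
      rw [playLength, List.count_eq_zero.mpr hb, zero_add, hcount] at h
      exact (Nat.div_pos_iff.mp h).2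
    refine ⟨List.replicate (u.length - k) AB.a, [], _, rfl, Or.inl ?_⟩
    rw [List.nil_append, ← List.replicate_add, Nat.add_sub_cancel' hk]
    exact List.eq_replicate_of_mem hall

theorem IsGrundy.eq_playLength_mod_two {k : ℕ} (hk : 0 < k) {g : List AB → ℕ}
    (hg : IsGrundy (Step k) g) (u : List AB) : g u = playLength k u % 2 :=
  hg.eq_mod_two (fun _ _ h => h.playLength_eq_succ hk)
    (fun _ h => exists_step_of_playLength_pos h) u

def countModDFA (m n : ℕ) (P : ZMod m → ZMod n → Prop) : DFA AB (ZMod m × ZMod n) where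
  step s
    | .a => (s.1 + 1, s.2)
    | .b => (s.1, s.2 + 1)
  start := (0, 0)
  accept := {s | P s.1 s.2}

lemma countModDFA_eval (m n : ℕ) (P : ZMod m → ZMod n → Prop) (u : List AB) :
    (countModDFA m n P).eval u = ((u.count AB.a : ZMod m), (u.count AB.b : ZMod n)) := by
  induction u using List.reverseRecOn with
  | nil => simp [countModDFA]
  | append_singleton u x ih =>
    rw [DFA.eval_append_singleton, ih]
    cases x <;> simp [countModDFA]

lemma regular_setOf_count_mod (m n : ℕ) [NeZero m] [NeZero n] (P : ℕ → ℕ → Prop) :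
    Regular {u | P (u.count AB.a % m) (u.count AB.b % n)} := by
  refine ⟨_, inferInstance, countModDFA m n fun r q => P r.val q.val, ?_⟩
  ext u
  rw [DFA.mem_accepts, countModDFA_eval]
  show P (u.count AB.a : ZMod m).val (u.count AB.b : ZMod n).val ↔ _
  rw [ZMod.val_natCast, ZMod.val_natCast]
  rfl

lemma playLength_mod_two (k : ℕ) (u : List AB) :
    playLength k u % 2 = (u.count AB.b % 2 + u.count AB.a % (k * 2) / k) % 2 := by
  rw [Nat.mod_mul_right_div_self, playLength, Nat.add_mod]

lemma regular_setOf_playLength_mod_two {k : ℕ} (hk : 0 < k) (t : ℕ) :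
    Regular {u | playLength k u % 2 = t} := by
  have : NeZero (k * 2) := ⟨by omega⟩
  simpa only [playLength_mod_two] using
    regular_setOf_count_mod (k * 2) 2 fun r q => (q + r / k) % 2 = t

theorem stmt15 (k : ℕ) (hk : 1 < k) (g : List AB → ℕ) (hg : IsGrundy (Step k) g) :
    (∀ u : List AB, g u = (u.count AB.b + u.count AB.a / k) % 2) ∧
    Regular {u | g u = 0} ∧ Regular {u | g u = 1} := by
  have hk0 : 0 < k := by omega
  obtain rfl : g = fun u => playLength k u % 2 := funext (hg.eq_playLength_mod_two hk0)
  exact ⟨fun _ => rfl, regular_setOf_playLength_mod_two hk0 0,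
    regular_setOf_playLength_mod_two hk0 1⟩
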